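/- For every prime p and all integers a₁, a₂ ≥ 1, the abelian group ℤ/p^{a₁}ℤ × ℤ/p^{a₂}ℤ is not absolutely closed in N₂. -/

import Mathlib

universe u

/-- A group is nilpotent of class at most 2 (lies in `N₂`) if its commutator
subgroup is contained in its center. -/
def IsNil2 (G : Type*) [Group G] : Prop :=
  commutator G ≤ Subgroup.center G

/-- The dominion of a subgroup `B` of `A` in the variety `N₂`: the set of `a ∈ A`
such that any two homomorphisms from `A` to a nil-2 group agreeing on `B` agree at `a`. -/
def Dominion {A : Type u} [Group A] (B : Subgroup A) : Set A :=
  {a | ∀ (C : Type u) [Group C], IsNil2 C →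
    ∀ f g : A →* C, (∀ b ∈ B, f b = g b) → f a = g a}

/-- A group `B` is absolutely closed in `N₂` if for every nil-2 group `A`
containing (a copy of) `B` as a subgroup, the dominion of `B` in `A` is `B`. -/
def IsAbsolutelyClosed (B : Type u) [Group B] : Prop :=
  ∀ (A : Type u) [Group A], IsNil2 A →
    ∀ ι : B →* A, Function.Injective ι →
      Dominion ι.range = (ι.range : Set A)

open scoped commutatorElement

section Nil2
variable {C : Type*} [Group C] (hC : ∀ x y z : C, Commute ⁅x, y⁆ z)
include hC

lemma comm_mul_left' (a b c : C) : ⁅a * b, c⁆ = ⁅a, c⁆ * ⁅b, c⁆ := by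
  calc ⁅a * b, c⁆ = a * (⁅b, c⁆ * a⁻¹) * ⁅a, c⁆ := by group
  _ = a * (a⁻¹ * ⁅b, c⁆) * ⁅a, c⁆ := by rw [(hC b c a⁻¹).eq]
  _ = ⁅b, c⁆ * ⁅a, c⁆ := by group
  _ = ⁅a, c⁆ * ⁅b, c⁆ := (hC b c ⁅a, c⁆).eq

lemma comm_mul_right' (a b c : C) : ⁅a, b * c⁆ = ⁅a, b⁆ * ⁅a, c⁆ := by
  calc ⁅a, b * c⁆ = ⁅a, b⁆ * (b * (⁅a, c⁆ * b⁻¹)) := by group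
  _ = ⁅a, b⁆ * (b * (b⁻¹ * ⁅a, c⁆)) := by rw [(hC a c b⁻¹).eq]
  _ = ⁅a, b⁆ * ⁅a, c⁆ := by group

lemma comm_pow_left' (a c : C) (k : ℕ) : ⁅a ^ k, c⁆ = ⁅a, c⁆ ^ k := by
  induction k with
  | zero => simp [commutatorElement_def]
  | succ n ih => rw [pow_succ, comm_mul_left' hC, ih, pow_succ]

lemma comm_pow_right' (a c : C) (k : ℕ) : ⁅a, c ^ k⁆ = ⁅a, c⁆ ^ k := by
  induction k with
  | zero => simp [commutatorElement_def]
  | succ n ih => rw [pow_succ, comm_mul_right' hC, ih, pow_succ]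

omit hC in
lemma comm_central_right (a x : C) (hx : ∀ z, Commute x z) : ⁅a, x⁆ = 1 :=
  commutatorElement_eq_one_iff_commute.mpr (hx a).symm

omit hC in
lemma comm_central_left (a x : C) (hx : ∀ z, Commute x z) : ⁅x, a⁆ = 1 :=
  commutatorElement_eq_one_iff_commute.mpr (hx a)

lemma mul_pow_nil2 (a b : C) (k : ℕ) :
    (a * b) ^ k = a ^ k * b ^ k * ⁅b, a⁆ ^ (k.choose 2) := by
  induction k with
  | zero => simp
  | succ n ih =>
    have hswap : b ^ n * a = a * b ^ n * ⁅b, a⁆ ^ n := by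
      calc b ^ n * a = ⁅b ^ n, a⁆ * (a * b ^ n) := by group
      _ = ⁅b, a⁆ ^ n * (a * b ^ n) := by rw [comm_pow_left' hC]
      _ = (a * b ^ n) * ⁅b, a⁆ ^ n := ((hC b a (a * b ^ n)).pow_left n).eq
      _ = a * b ^ n * ⁅b, a⁆ ^ n := by group
    have c1 : Commute (⁅b, a⁆ ^ n.choose 2) a := (hC b a a).pow_left _
    have c2 : Commute (⁅b, a⁆ ^ n.choose 2) b := (hC b a b).pow_left _
    have c3 : Commute (⁅b, a⁆ ^ n) b := (hC b a b).pow_left _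
    calc (a * b) ^ (n + 1) = (a * b) ^ n * (a * b) := pow_succ _ _
    _ = a ^ n * b ^ n * ⁅b, a⁆ ^ n.choose 2 * (a * b) := by rw [ih]
    _ = a ^ n * b ^ n * (⁅b, a⁆ ^ n.choose 2 * a) * b := by group
    _ = a ^ n * b ^ n * (a * ⁅b, a⁆ ^ n.choose 2) * b := by rw [c1.eq]
    _ = a ^ n * (b ^ n * a) * (⁅b, a⁆ ^ n.choose 2 * b) := by group
    _ = a ^ n * (b ^ n * a) * (b * ⁅b, a⁆ ^ n.choose 2) := by rw [c2.eq]
    _ = a ^ n * (a * b ^ n * ⁅b, a⁆ ^ n) * (b * ⁅b, a⁆ ^ n.choose 2) := by rw [hswap]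
    _ = a ^ (n + 1) * b ^ n * (⁅b, a⁆ ^ n * b) * ⁅b, a⁆ ^ n.choose 2 := by group
    _ = a ^ (n + 1) * b ^ n * (b * ⁅b, a⁆ ^ n) * ⁅b, a⁆ ^ n.choose 2 := by rw [c3.eq]
    _ = a ^ (n + 1) * b ^ (n + 1) * (⁅b, a⁆ ^ n * ⁅b, a⁆ ^ n.choose 2) := by group
    _ = a ^ (n + 1) * b ^ (n + 1) * ⁅b, a⁆ ^ ((n + 1).choose 2) := by
        rw [← pow_add]
        congr 1
        rw [Nat.choose_succ_succ n 1, Nat.choose_one_right]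


lemma core_aux (m : ℕ) (U W kU kW : C) (hU : (U * kU) ^ (2 * m) = U ^ (2 * m))
    (hW : (W * kW) ^ (2 * m) = W ^ (2 * m)) :
    (U * kU * (W * kW)) ^ (2 * m) * ⁅U * kU, W * kW⁆ ^ m =
      (U * W) ^ (2 * m) * ⁅U, W⁆ ^ m := by
  have harith : (2 * m).choose 2 = m + 2 * m * (m - 1) := by
    rcases m with - | k
    · simp
    · have h2 : 2 * (k + 1) - 1 = 2 * k + 1 := by omega
      have h3 : (k + 1) - 1 = k := by omega
      rw [Nat.choose_two_right, h2, h3,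
        show 2 * (k + 1) * (2 * k + 1) = 2 * ((k + 1) * (2 * k + 1)) by ring,
        Nat.mul_div_cancel_left _ (by norm_num : 0 < 2)]
      ring
  have hcent : ∀ X k : C, (X * k) ^ (2 * m) = X ^ (2 * m) →
      ∀ z, Commute (k ^ (2 * m)) z := by
    intro X k hX z
    rw [mul_pow_nil2 hC] at hX
    have h2 : k ^ (2 * m) * ⁅k, X⁆ ^ ((2 * m).choose 2) = 1 := by
      have h3 : X ^ (2 * m) * (k ^ (2 * m) * ⁅k, X⁆ ^ ((2 * m).choose 2)) =
          X ^ (2 * m) * 1 := by rw [mul_one, ← mul_assoc, hX]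
      exact mul_left_cancel h3
    rw [eq_inv_of_mul_eq_one_left h2]
    exact ((hC k X z).pow_left _).inv_left
  have hkUc : ∀ z, Commute (kU ^ (2 * m)) z := hcent U kU hU
  have hkWc : ∀ z, Commute (kW ^ (2 * m)) z := hcent W kW hW
  have hA : ⁅W, kU⁆ ^ (2 * m) = 1 := by
    rw [← comm_pow_right' hC]; exact comm_central_right _ _ hkUc
  have hB : ⁅kW, U⁆ ^ (2 * m) = 1 := by
    rw [← comm_pow_left' hC]; exact comm_central_left _ _ hkWc
  have hD : ⁅kW, kU⁆ ^ (2 * m) = 1 := by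
    rw [← comm_pow_left' hC]; exact comm_central_left _ _ hkWc
  set R := ⁅W, kU⁆ * (⁅kW, U⁆ * ⁅kW, kU⁆) with hRdef
  have hR : R ^ (2 * m) = 1 := by
    rw [hRdef, (hC W kU _).mul_pow, (hC kW U _).mul_pow, hA, hB, hD]
    simp
  have hT : ⁅W * kW, U * kU⁆ = ⁅W, U⁆ * R := by
    rw [comm_mul_left' hC W kW (U * kU), comm_mul_right' hC W U kU,
      comm_mul_right' hC kW U kU, hRdef]
    group
  have hTR : Commute ⁅W, U⁆ R := hC W U R
  have hRc2 : R ^ ((2 * m).choose 2) = R ^ m := by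
    rw [harith, pow_add, pow_mul, hR, one_pow, mul_one]
  have key : ∀ X Y : C, (X * Y) ^ (2 * m) * ⁅X, Y⁆ ^ m =
      X ^ (2 * m) * Y ^ (2 * m) * (⁅Y, X⁆ ^ ((2 * m).choose 2) * (⁅Y, X⁆ ^ m)⁻¹) := by
    intro X Y
    rw [mul_pow_nil2 hC, show ⁅X, Y⁆ = ⁅Y, X⁆⁻¹ from (commutatorElement_inv Y X).symm,
      inv_pow]
    group
  rw [key (U * kU) (W * kW), key U W, hU, hW, hT, hTR.mul_pow, hTR.mul_pow, hRc2]
  group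

end Nil2


@[ext]
structure Wit (p a₁ a₂ : ℕ) : Type where
  x : ZMod (2 * p ^ 2 * p ^ (a₁ - 1))
  y : ZMod (2 * p ^ 2 * p ^ (a₂ - 1))
  z : ZMod (2 * p ^ 2)

namespace Wit

variable {p a₁ a₂ : ℕ}

def pi {k : ℕ} : ZMod (2 * p ^ 2 * p ^ k) →+* ZMod (2 * p ^ 2) :=
  ZMod.castHom (dvd_mul_right _ _) _

@[simp] lemma pi_natCast {j : ℕ} (k : ℕ) :
    pi ((k : ZMod (2 * p ^ 2 * p ^ j))) = (k : ZMod (2 * p ^ 2)) := map_natCast pi k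
@[simp] lemma pi_one {j : ℕ} : pi ((1 : ZMod (2 * p ^ 2 * p ^ j))) = 1 := map_one pi
@[simp] lemma pi_zero {j : ℕ} : pi ((0 : ZMod (2 * p ^ 2 * p ^ j))) = 0 := map_zero pi
@[simp] lemma pi_neg {j : ℕ} (a : ZMod (2 * p ^ 2 * p ^ j)) :
    pi (-a) = -(pi a) := map_neg pi a
@[simp] lemma pi_add {j : ℕ} (a b : ZMod (2 * p ^ 2 * p ^ j)) :
    pi (a + b) = pi a + pi b := map_add pi a b

instance : Mul (Wit p a₁ a₂) :=
  ⟨fun g h => ⟨g.x + h.x, g.y + h.y, g.z + h.z + pi g.y * pi h.x⟩⟩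

instance : One (Wit p a₁ a₂) := ⟨⟨0, 0, 0⟩⟩

instance : Inv (Wit p a₁ a₂) :=
  ⟨fun g => ⟨-g.x, -g.y, -g.z + pi g.y * pi g.x⟩⟩

@[simp] lemma mul_x (g h : Wit p a₁ a₂) : (g * h).x = g.x + h.x := rfl
@[simp] lemma mul_y (g h : Wit p a₁ a₂) : (g * h).y = g.y + h.y := rfl
@[simp] lemma mul_z (g h : Wit p a₁ a₂) :
    (g * h).z = g.z + h.z + pi g.y * pi h.x := rfl
@[simp] lemma one_x : (1 : Wit p a₁ a₂).x = 0 := rfl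
@[simp] lemma one_y : (1 : Wit p a₁ a₂).y = 0 := rfl
@[simp] lemma one_z : (1 : Wit p a₁ a₂).z = 0 := rfl
@[simp] lemma inv_x (g : Wit p a₁ a₂) : (g⁻¹).x = -g.x := rfl
@[simp] lemma inv_y (g : Wit p a₁ a₂) : (g⁻¹).y = -g.y := rfl
@[simp] lemma inv_z (g : Wit p a₁ a₂) : (g⁻¹).z = -g.z + pi g.y * pi g.x := rfl

instance : Group (Wit p a₁ a₂) :=
  Group.ofLeftAxioms
    (by intro a b c; ext <;> simp [map_add] <;> ring)
    (by intro a; ext <;> simp)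
    (by intro a; ext <;> simp [map_neg] <;> ring)

lemma central_of (g : Wit p a₁ a₂) (hx : g.x = 0) (hy : g.y = 0) :
    g ∈ Subgroup.center (Wit p a₁ a₂) := by
  rw [Subgroup.mem_center_iff]
  intro h
  ext <;> simp [hx, hy] <;> ring

lemma isNil2' : commutator (Wit p a₁ a₂) ≤ Subgroup.center (Wit p a₁ a₂) := by
  rw [commutator_def]
  rw [Subgroup.commutator_le]
  intro g _ h _
  apply central_of
  · simp [commutatorElement_def]
  · simp [commutatorElement_def]

def u : Wit p a₁ a₂ := ⟨1, 0, 0⟩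
def w : Wit p a₁ a₂ := ⟨0, 1, 0⟩

lemma u_pow (k : ℕ) : (u : Wit p a₁ a₂) ^ k = ⟨(k : ZMod _), 0, 0⟩ := by
  induction k with
  | zero => simp; rfl
  | succ n ih => rw [pow_succ, ih]; ext <;> simp [u] <;> push_cast <;> ring

lemma w_pow (k : ℕ) : (w : Wit p a₁ a₂) ^ k = ⟨0, (k : ZMod _), 0⟩ := by
  induction k with
  | zero => simp; rfl
  | succ n ih => rw [pow_succ, ih]; ext <;> simp [w] <;> push_cast <;> ring

lemma uw_pow (k : ℕ) : ((u * w : Wit p a₁ a₂)) ^ k =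
    ⟨(k : ZMod _), (k : ZMod _), ((k.choose 2 : ℕ) : ZMod _)⟩ := by
  induction k with
  | zero => simp; rfl
  | succ n ih =>
    rw [pow_succ, ih]
    ext <;> simp [u, w, Nat.choose_succ_succ n 1, Nat.choose_one_right]
      <;> push_cast <;> ring

lemma comm_uw : ⁅(u : Wit p a₁ a₂), w⁆ = (⟨0, 0, -1⟩ : Wit p a₁ a₂) := by
  ext <;> simp [commutatorElement_def, u, w] <;> ring

lemma comm_uw_pow (k : ℕ) :
    ⁅(u : Wit p a₁ a₂), w⁆ ^ k = (⟨0, 0, -(k : ZMod (2 * p ^ 2))⟩ : Wit p a₁ a₂) := by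
  rw [comm_uw]
  induction k with
  | zero => simp; rfl
  | succ n ih => rw [pow_succ, ih]; ext <;> simp <;> push_cast <;> ring


lemma core_nil2' {C : Type*} [Group C] (hC : ∀ x y z : C, Commute ⁅x, y⁆ z)
    (m : ℕ) (U W U₂ W₂ : C) (hU : U ^ (2 * m) = U₂ ^ (2 * m))
    (hW : W ^ (2 * m) = W₂ ^ (2 * m)) :
    (U * W) ^ (2 * m) * ⁅U, W⁆ ^ m = (U₂ * W₂) ^ (2 * m) * ⁅U₂, W₂⁆ ^ m := by
  have h := core_aux hC m U W (U⁻¹ * U₂) (W⁻¹ * W₂)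
    (by rw [show U * (U⁻¹ * U₂) = U₂ by group]; exact hU.symm)
    (by rw [show W * (W⁻¹ * W₂) = W₂ by group]; exact hW.symm)
  rw [show U * (U⁻¹ * U₂) = U₂ by group, show W * (W⁻¹ * W₂) = W₂ by group] at h
  exact h.symm


/-! ### The embedding of `ZMod (p^a₁) × ZMod (p^a₂)` -/

def emb (p a : ℕ) (z : ZMod (p ^ a)) : ZMod (2 * p ^ 2 * p ^ (a - 1)) :=
  ((z.val * (2 * p) : ℕ) : ZMod _)

lemma hMeq {p a : ℕ} (ha : 1 ≤ a) : p ^ a * (2 * p) = 2 * p ^ 2 * p ^ (a - 1) := by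
  obtain ⟨s, rfl⟩ : ∃ s, a = s + 1 := ⟨a - 1, by omega⟩
  simp only [Nat.add_sub_cancel, pow_succ]
  ring

lemma emb_natmul {p a : ℕ} (ha : 1 ≤ a) (x : ℕ) :
    (((x % p ^ a) * (2 * p) : ℕ) : ZMod (2 * p ^ 2 * p ^ (a - 1))) =
      ((x * (2 * p) : ℕ) : ZMod (2 * p ^ 2 * p ^ (a - 1))) := by
  have h0 : ((p ^ a * (2 * p) : ℕ) : ZMod (2 * p ^ 2 * p ^ (a - 1))) = 0 := by
    rw [hMeq ha]; exact ZMod.natCast_self _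
  conv_rhs => rw [← Nat.div_add_mod x (p ^ a)]
  push_cast at h0 ⊢
  linear_combination -((x / p ^ a : ℕ) : ZMod (2 * p ^ 2 * p ^ (a - 1))) * h0

lemma emb_add {p a : ℕ} (hp : p.Prime) (ha : 1 ≤ a) (z z' : ZMod (p ^ a)) :
    emb p a (z + z') = emb p a z + emb p a z' := by
  haveI : NeZero (p ^ a) := ⟨pow_ne_zero _ hp.pos.ne'⟩
  unfold emb
  rw [ZMod.val_add, emb_natmul ha]
  push_cast
  ring

lemma emb_one {p a : ℕ} (hp : p.Prime) (ha : 1 ≤ a) :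
    emb p a (1 : ZMod (p ^ a)) = ((2 * p : ℕ) : ZMod (2 * p ^ 2 * p ^ (a - 1))) := by
  haveI : Fact (1 < p ^ a) := ⟨Nat.one_lt_pow (by omega) hp.one_lt⟩
  unfold emb
  rw [ZMod.val_one, one_mul]

lemma emb_eq_zero {p a : ℕ} (hp : p.Prime) (ha : 1 ≤ a) (z : ZMod (p ^ a))
    (h : emb p a z = 0) : z = 0 := by
  haveI : NeZero (p ^ a) := ⟨pow_ne_zero _ hp.pos.ne'⟩
  haveI : NeZero (2 * p ^ 2 * p ^ (a - 1)) :=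
    ⟨by have := hp.pos; positivity⟩
  unfold emb at h
  rw [ZMod.natCast_eq_zero_iff, ← hMeq ha] at h
  have h2 : p ^ a ∣ z.val := by
    have h2p : 0 < 2 * p := by have := hp.pos; omega
    exact (Nat.mul_dvd_mul_iff_right h2p).mp h
  have h3 : z.val = 0 := Nat.eq_zero_of_dvd_of_lt h2 (ZMod.val_lt z)
  exact (ZMod.val_eq_zero z).mp h3

def iota (p a₁ a₂ : ℕ) (hp : p.Prime) (h₁ : 1 ≤ a₁) (h₂ : 1 ≤ a₂) :
    (Multiplicative (ZMod (p ^ a₁)) × Multiplicative (ZMod (p ^ a₂))) →* Wit p a₁ a₂ :=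
  MonoidHom.mk'
    (fun b => ⟨emb p a₁ b.1.toAdd, emb p a₂ b.2.toAdd, 0⟩)
    (by
      intro b c
      have hpi : ∀ (j j' : ℕ) (z : ZMod (p ^ a₂)) (z' : ZMod (p ^ a₁)),
          pi (emb p a₂ z) * pi (emb p a₁ z') = (0 : ZMod (2 * p ^ 2)) := by
        intro j j' z z'
        unfold emb
        rw [pi_natCast, pi_natCast, ← Nat.cast_mul,
          show z.val * (2 * p) * (z'.val * (2 * p)) = 2 * p ^ 2 * (2 * (z.val * z'.val))
            from by ring, Nat.cast_mul, ZMod.natCast_self, zero_mul]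
      ext
      · show emb p a₁ (b.1 * c.1).toAdd = emb p a₁ b.1.toAdd + emb p a₁ c.1.toAdd
        rw [toAdd_mul, emb_add hp h₁]
      · show emb p a₂ (b.2 * c.2).toAdd = emb p a₂ b.2.toAdd + emb p a₂ c.2.toAdd
        rw [toAdd_mul, emb_add hp h₂]
      · show (0 : ZMod (2 * p ^ 2)) = 0 + 0 + pi (emb p a₂ b.2.toAdd) * pi (emb p a₁ c.1.toAdd)
        rw [hpi 0 0]
        ring)

lemma iota_injective (p a₁ a₂ : ℕ) (hp : p.Prime) (h₁ : 1 ≤ a₁) (h₂ : 1 ≤ a₂) :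
    Function.Injective (iota p a₁ a₂ hp h₁ h₂) := by
  rw [injective_iff_map_eq_one]
  intro b hb
  have hx := congrArg Wit.x hb
  have hy := congrArg Wit.y hb
  have h1 : emb p a₁ b.1.toAdd = 0 := hx
  have h2 : emb p a₂ b.2.toAdd = 0 := hy
  have e1 : b.1.toAdd = 0 := emb_eq_zero hp h₁ _ h1
  have e2 : b.2.toAdd = 0 := emb_eq_zero hp h₂ _ h2
  have : b = (1, 1) := by
    ext
    · exact e1
    · exact e2
  rw [this]
  rfl

/-! ### The witness element -/

def witness (p a₁ a₂ : ℕ) : Wit p a₁ a₂ :=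
  ((u : Wit p a₁ a₂) * w) ^ (2 * p) * ⁅(u : Wit p a₁ a₂), w⁆ ^ p

lemma witness_eq (p a₁ a₂ : ℕ) : witness p a₁ a₂ =
    (⟨((2 * p : ℕ) : _), ((2 * p : ℕ) : _),
      (((2 * p).choose 2 : ℕ) : ZMod (2 * p ^ 2)) - ((p : ℕ) : ZMod (2 * p ^ 2))⟩ :
      Wit p a₁ a₂) := by
  unfold witness
  rw [uw_pow, comm_uw_pow]
  ext <;> simp <;> ring

lemma choose_aux {p : ℕ} (hp : p.Prime) : (2 * p).choose 2 + p = 2 * p ^ 2 := by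
  obtain ⟨k, rfl⟩ : ∃ k, p = k + 1 := ⟨p - 1, by have := hp.pos; omega⟩
  rw [Nat.choose_two_right, show 2 * (k + 1) - 1 = 2 * k + 1 from by omega,
    show 2 * (k + 1) * (2 * k + 1) = 2 * ((k + 1) * (2 * k + 1)) from by ring,
    Nat.mul_div_cancel_left _ (by norm_num : 0 < 2)]
  ring

lemma witness_z {p a₁ a₂ : ℕ} (hp : p.Prime) :
    (witness p a₁ a₂).z = -((2 * p : ℕ) : ZMod (2 * p ^ 2)) := by
  rw [witness_eq]
  show (((2 * p).choose 2 : ℕ) : ZMod (2 * p ^ 2)) - ((p : ℕ) : ZMod (2 * p ^ 2)) = _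
  have h0 : (((2 * p).choose 2 + p : ℕ) : ZMod (2 * p ^ 2)) = 0 := by
    rw [choose_aux hp]; exact ZMod.natCast_self _
  push_cast at h0 ⊢
  linear_combination h0

end Wit

open Wit

/-- For every prime `p` and `a₁, a₂ ≥ 1`, the group `ℤ/p^{a₁}ℤ × ℤ/p^{a₂}ℤ` is not
absolutely closed in `N₂`. -/
theorem zmod_prod_zmod_not_absolutelyClosed (p : ℕ) (hp : p.Prime)
    (a₁ a₂ : ℕ) (h₁ : 1 ≤ a₁) (h₂ : 1 ≤ a₂) :
    ¬ IsAbsolutelyClosed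
        (Multiplicative (ZMod (p ^ a₁)) × Multiplicative (ZMod (p ^ a₂))) := by
  intro habs
  have hrange := habs (Wit p a₁ a₂) isNil2' (iota p a₁ a₂ hp h₁ h₂)
    (iota_injective p a₁ a₂ hp h₁ h₂)
  -- the witness is in the dominion
  have hdom : witness p a₁ a₂ ∈ Dominion (iota p a₁ a₂ hp h₁ h₂).range := by
    intro CC _ hnil f g hfg
    have hC' : ∀ x y z : CC, Commute ⁅x, y⁆ z := by
      intro x y z
      exact ((Subgroup.mem_center_iff.mp (hnil
        (Subgroup.commutator_mem_commutator (Subgroup.mem_top x) (Subgroup.mem_top y)))) z).symm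
    have hu_mem : (u : Wit p a₁ a₂) ^ (2 * p) ∈ (iota p a₁ a₂ hp h₁ h₂).range := by
      refine ⟨(Multiplicative.ofAdd (1 : ZMod (p ^ a₁)), 1), ?_⟩
      rw [u_pow]
      show (⟨emb p a₁ _, emb p a₂ _, 0⟩ : Wit p a₁ a₂) = _
      have e1 : emb p a₁ (Multiplicative.ofAdd (1 : ZMod (p ^ a₁))).toAdd =
          ((2 * p : ℕ) : ZMod (2 * p ^ 2 * p ^ (a₁ - 1))) := emb_one hp h₁
      have e2 : emb p a₂ ((1 : Multiplicative (ZMod (p ^ a₂)))).toAdd = 0 := by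
        show emb p a₂ 0 = 0
        unfold emb
        simp
      ext
      · rw [e1]
      · rw [e2]
      · rfl
    have hw_mem : (w : Wit p a₁ a₂) ^ (2 * p) ∈ (iota p a₁ a₂ hp h₁ h₂).range := by
      refine ⟨(1, Multiplicative.ofAdd (1 : ZMod (p ^ a₂))), ?_⟩
      rw [w_pow]
      show (⟨emb p a₁ _, emb p a₂ _, 0⟩ : Wit p a₁ a₂) = _
      have e1 : emb p a₁ ((1 : Multiplicative (ZMod (p ^ a₁)))).toAdd = 0 := by
        show emb p a₁ 0 = 0
        unfold emb
        simp
      have e2 : emb p a₂ (Multiplicative.ofAdd (1 : ZMod (p ^ a₂))).toAdd =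
          ((2 * p : ℕ) : ZMod (2 * p ^ 2 * p ^ (a₂ - 1))) := emb_one hp h₂
      ext
      · rw [e1]
      · rw [e2]
      · rfl
    have hU : (f u) ^ (2 * p) = (g u) ^ (2 * p) := by
      have := hfg _ hu_mem
      rwa [map_pow, map_pow] at this
    have hW : (f w) ^ (2 * p) = (g w) ^ (2 * p) := by
      have := hfg _ hw_mem
      rwa [map_pow, map_pow] at this
    show f (witness p a₁ a₂) = g (witness p a₁ a₂)
    unfold witness
    rw [map_mul, map_mul, map_pow, map_pow, map_pow, map_pow,
      map_commutatorElement, map_commutatorElement, map_mul, map_mul]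
    exact core_nil2' hC' p (f u) (f w) (g u) (g w) hU hW
  -- but the witness is not in the range
  have hnr : witness p a₁ a₂ ∉ ((iota p a₁ a₂ hp h₁ h₂).range : Set (Wit p a₁ a₂)) := by
    rintro ⟨b, hb⟩
    have hz := congrArg Wit.z hb
    have h0 : (0 : ZMod (2 * p ^ 2)) = -((2 * p : ℕ) : ZMod (2 * p ^ 2)) := by
      rw [← witness_z hp]
      exact hz
    have h2 : ((2 * p : ℕ) : ZMod (2 * p ^ 2)) = 0 := by
      rw [← neg_eq_zero, ← h0]
    haveI : NeZero (2 * p ^ 2) := ⟨by have := hp.pos; positivity⟩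
    rw [ZMod.natCast_eq_zero_iff] at h2
    have hle : 2 * p ^ 2 ≤ 2 * p := Nat.le_of_dvd (by have := hp.pos; omega) h2
    have := hp.two_le
    nlinarith
  rw [hrange] at hdom
  exact hnr hdom
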